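/- arXiv:1502.06143 — 2 statements merged into one kernel-verified Lean document; each statement's English description precedes it below -/
import Mathlib

section
/- Let F : R^d → R^d be a bounded measurable vector field, ρ a probability density on R^d, and p > 0 real. Then for each j ∈ {1,…,N}, ∫ |F⋆ρ(x_j) − (1/N)∑_{k=1}^N F(x_j − x_k)|^p ∏_{m=1}^N ρ(x_m)dx_m ≤ (2⌊p/2⌋ + 2)·(2‖F‖_∞)^p / N^{min(p/2, 1)}. -/
/-!
Write the fluctuation as `N⁻¹ ∑ₖ (F ⋆ ρ (x_j) - F (x_j - x_k))`. Conditionally on `x_j`, the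
summands with `k ≠ j` are independent, centred and bounded by `2‖F‖_∞`, hence orthogonal in `L²`,
so the second moment is at most `(2‖F‖_∞)² / N`. The fluctuation itself is bounded by `2‖F‖_∞`,
and Jensen's inequality (for `p ≤ 2`) or this sup bound (for `p ≥ 2`) turns the `L²` estimate
into the `L^p` one.
-/

open MeasureTheory ProbabilityTheory Finset

section LpOfL2

variable {α : Type*} [MeasurableSpace α] {μ : Measure α} [IsProbabilityMeasure μ]
  {f : α → ℝ} {B p : ℝ}

lemma integrable_rpow_of_le (hf : AEMeasurable f μ) (hf0 : ∀ x, 0 ≤ f x) (hfB : ∀ x, f x ≤ B)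
    (hp : 0 ≤ p) : Integrable (fun x => f x ^ p) μ :=
  .of_bound (hf.pow_const p).aestronglyMeasurable (B ^ p) <| .of_forall fun x => by
    rw [Real.norm_of_nonneg (Real.rpow_nonneg (hf0 x) p)]
    exact Real.rpow_le_rpow (hf0 x) (hfB x) hp

lemma integrable_sq_of_le (hf : AEMeasurable f μ) (hf0 : ∀ x, 0 ≤ f x) (hfB : ∀ x, f x ≤ B) :
    Integrable (fun x => f x ^ 2) μ := by
  simpa using integrable_rpow_of_le hf hf0 hfB (p := 2) (by norm_num)

/-- Lyapunov's inequality `‖f‖_p ≤ ‖f‖_2`, by Jensen for the concave `t ↦ t ^ (p / 2)`. -/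
lemma integral_rpow_le_integral_sq_rpow (hf : AEMeasurable f μ) (hf0 : ∀ x, 0 ≤ f x)
    (hfB : ∀ x, f x ≤ B) (hp0 : 0 ≤ p) (hp2 : p ≤ 2) :
    ∫ x, f x ^ p ∂μ ≤ (∫ x, f x ^ 2 ∂μ) ^ (p / 2) := by
  have hsq_rpow : ∀ x, (f x ^ 2) ^ (p / 2) = f x ^ p := fun x => by
    rw [← Real.rpow_natCast, ← Real.rpow_mul (hf0 x)]
    norm_num [mul_div_cancel₀]
  simpa only [Function.comp_def, hsq_rpow] using
    (Real.concaveOn_rpow (by positivity : 0 ≤ p / 2) (by linarith)).le_map_integral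
      (Real.continuous_rpow_const (by positivity)).continuousOn isClosed_Ici
      (.of_forall fun x => sq_nonneg (f x)) (integrable_sq_of_le hf hf0 hfB)
      (by simpa only [Function.comp_def, hsq_rpow] using integrable_rpow_of_le hf hf0 hfB hp0)

lemma integral_rpow_le_rpow_mul_integral_sq (hf : AEMeasurable f μ)
    (hf0 : ∀ x, 0 ≤ f x) (hfB : ∀ x, f x ≤ B) (hp2 : 2 ≤ p) :
    ∫ x, f x ^ p ∂μ ≤ B ^ (p - 2) * ∫ x, f x ^ 2 ∂μ := by
  rw [← integral_const_mul]
  refine integral_mono (integrable_rpow_of_le hf hf0 hfB (by linarith))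
    ((integrable_sq_of_le hf hf0 hfB).const_mul _) fun x => ?_
  calc f x ^ p = f x ^ (p - 2) * f x ^ 2 := by
        rw [← Real.rpow_natCast, ← Real.rpow_add' (hf0 x) (by push_cast; linarith)]
        norm_num
    _ ≤ B ^ (p - 2) * f x ^ 2 := by
        gcongr
        · exact hf0 x
        · exact hfB x

lemma integral_rpow_le_of_integral_sq_le (hf : AEMeasurable f μ) (hf0 : ∀ x, 0 ≤ f x)
    (hfB : ∀ x, f x ≤ B) (hp : 0 ≤ p) {ε : ℝ} (hε : 0 ≤ ε) (h2 : ∫ x, f x ^ 2 ∂μ ≤ B ^ 2 * ε) :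
    ∫ x, f x ^ p ∂μ ≤ B ^ p * ε ^ min (p / 2) 1 := by
  have hB : 0 ≤ B := (hf0 (nonempty_of_isProbabilityMeasure μ).some).trans (hfB _)
  rcases le_total p 2 with hp2 | hp2
  · calc ∫ x, f x ^ p ∂μ ≤ (∫ x, f x ^ 2 ∂μ) ^ (p / 2) :=
          integral_rpow_le_integral_sq_rpow hf hf0 hfB hp hp2
      _ ≤ (B ^ 2 * ε) ^ (p / 2) :=
          Real.rpow_le_rpow (integral_nonneg fun x => sq_nonneg _) h2 (by positivity)
      _ = B ^ p * ε ^ min (p / 2) 1 := by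
          rw [min_eq_left (by linarith), Real.mul_rpow (by positivity) hε, ← Real.rpow_natCast,
            ← Real.rpow_mul hB]
          norm_num [mul_div_cancel₀]
  · calc ∫ x, f x ^ p ∂μ ≤ B ^ (p - 2) * ∫ x, f x ^ 2 ∂μ :=
          integral_rpow_le_rpow_mul_integral_sq hf hf0 hfB hp2
      _ ≤ B ^ (p - 2) * (B ^ 2 * ε) := by gcongr
      _ = B ^ p * ε ^ min (p / 2) 1 := by
          rw [min_eq_right (by linarith), Real.rpow_one, ← mul_assoc, ← Real.rpow_natCast,
            ← Real.rpow_add' hB (by push_cast; linarith)]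
          norm_num

end LpOfL2

section CenteredSum

variable {α E : Type*} [MeasurableSpace α] {ν : Measure α} [IsProbabilityMeasure ν]
  [NormedAddCommGroup E] [InnerProductSpace ℝ E] [CompleteSpace E] {n : ℕ} {h : α → E}

local notation "⟪" x ", " y "⟫" => @inner ℝ _ _ x y

lemma integral_inner_apply_apply_of_ne (hh : Integrable h ν) {k l : Fin n} (hkl : k ≠ l) :
    ∫ y : Fin n → α, ⟪h (y k), h (y l)⟫ ∂Measure.pi (fun _ => ν)
      = ⟪∫ x, h x ∂ν, ∫ x, h x ∂ν⟫ := by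
  have hind : IndepFun (fun y : Fin n → α => y k) (fun y => y l) (Measure.pi fun _ => ν) :=
    (iIndepFun_pi (X := fun _ (x : α) => x) fun _ => aemeasurable_id).indepFun hkl
  have hmap : ∀ i : Fin n, (Measure.pi fun _ => ν).map (fun y : Fin n → α => y i) = ν :=
    fun i => (measurePreserving_eval _ i).map_eq
  calc _ = innerSL ℝ (∫ y, h (y k) ∂Measure.pi fun _ => ν) (∫ y, h (y l) ∂Measure.pi fun _ => ν) :=
        hind.integral_bilin_comp_comp (measurable_pi_apply k).aemeasurable
          (measurable_pi_apply l).aemeasurable (by rwa [hmap]) (by rwa [hmap]) (innerSL ℝ)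
    _ = ⟪∫ x, h x ∂ν, ∫ x, h x ∂ν⟫ := by
        rw [integral_comp_eval hh.1, integral_comp_eval hh.1]
        rfl

/-- Pythagoras: the summands are independent and centred, hence orthogonal in `L²`. -/
lemma integral_norm_add_sum_apply_sq (hh : StronglyMeasurable h) {M : ℝ} (hM : ∀ x, ‖h x‖ ≤ M)
    (h0 : ∫ x, h x ∂ν = 0) (c : E) :
    ∫ y : Fin n → α, ‖c + ∑ m, h (y m)‖ ^ 2 ∂Measure.pi (fun _ => ν)
      = ‖c‖ ^ 2 + n * ∫ x, ‖h x‖ ^ 2 ∂ν := by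
  set π := Measure.pi fun _ : Fin n => ν
  have hint : Integrable h ν := .of_bound hh.aestronglyMeasurable M (.of_forall hM)
  have hint_eval : ∀ m : Fin n, Integrable (fun y : Fin n → α => h (y m)) π :=
    fun m => integrable_comp_eval hint
  have hint_inner : ∀ k l : Fin n, Integrable (fun y : Fin n → α => ⟪h (y k), h (y l)⟫) π :=
    fun k l => .of_bound ((hh.comp_measurable (measurable_pi_apply k)).inner
      (hh.comp_measurable (measurable_pi_apply l))).aestronglyMeasurable (M * M)
      (.of_forall fun y => (norm_inner_le_norm _ _).trans
        (mul_le_mul (hM _) (hM _) (norm_nonneg _) ((norm_nonneg _).trans (hM (y k)))))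
  have hexpand : ∀ y : Fin n → α, ‖c + ∑ m, h (y m)‖ ^ 2
      = ‖c‖ ^ 2 + 2 * ⟪c, ∑ m, h (y m)⟫ + ∑ k, ∑ l, ⟪h (y k), h (y l)⟫ := fun y => by
    rw [norm_add_sq_real, ← real_inner_self_eq_norm_sq (∑ m, h (y m)), sum_inner]
    simp_rw [inner_sum]
  have hmean : ∫ y, ∑ m, h (y m) ∂π = 0 := by
    rw [integral_finsetSum _ fun m _ => hint_eval m]
    exact sum_eq_zero fun m _ => by rw [integral_comp_eval hint.1, h0]
  have hcross : ∀ k l, ∫ y, ⟪h (y k), h (y l)⟫ ∂π = if k = l then ∫ x, ‖h x‖ ^ 2 ∂ν else 0 := by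
    intro k l
    split_ifs with hkl
    · subst hkl
      simp_rw [real_inner_self_eq_norm_sq]
      exact integral_comp_eval (μ := fun _ : Fin n => ν) (f := fun x => ‖h x‖ ^ 2)
        (hh.norm.pow 2).aestronglyMeasurable
    · rw [integral_inner_apply_apply_of_ne hint hkl, h0, inner_zero_left]
  have hint_sum : Integrable (fun y : Fin n → α => ∑ k, ∑ l, ⟪h (y k), h (y l)⟫) π :=
    integrable_finsetSum _ fun k _ => integrable_finsetSum _ fun l _ => hint_inner k l
  have hlin : Integrable (fun y : Fin n → α => 2 * ⟪c, ∑ m, h (y m)⟫) π :=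
    ((integrable_finsetSum _ fun m _ => hint_eval m).const_inner c).const_mul 2
  simp_rw [hexpand]
  rw [integral_add (f := fun y => ‖c‖ ^ 2 + 2 * ⟪c, ∑ m, h (y m)⟫)
      ((integrable_const _).add hlin) hint_sum,
    integral_add (integrable_const _) hlin, integral_const, integral_const_mul,
    integral_inner (integrable_finsetSum _ fun m _ => hint_eval m), hmean,
    integral_finsetSum _ fun k _ => integrable_finsetSum _ fun l _ => hint_inner k l]
  simp_rw [integral_finsetSum _ fun l _ => hint_inner _ l, hcross]
  simp

end CenteredSum

section EmpiricalFluctuation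

variable {G : Type*} [AddGroup G] [MeasurableSpace G]

section NormedSpace

variable {E : Type*} [NormedAddCommGroup E] [NormedSpace ℝ E] {F : G → E} {ν : Measure G} {C : ℝ}
  {N : ℕ}

/-- `F ⋆ ρ (X j) - N⁻¹ ∑ₖ F (X j - X k)`, with the convolution taken against the law `ν` of one
particle. -/
noncomputable def empiricalFluctuation (F : G → E) (ν : Measure G) (j : Fin N) (X : Fin N → G) :
    E :=
  (∫ z, F (X j - z) ∂ν) - (N : ℝ)⁻¹ • ∑ k, F (X j - X k)

lemma norm_empiricalFluctuation_le [IsProbabilityMeasure ν] (hFC : ∀ x, ‖F x‖ ≤ C)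
    (j : Fin N) (X : Fin N → G) : ‖empiricalFluctuation F ν j X‖ ≤ 2 * C := by
  have hN : (0 : ℝ) < N := Nat.cast_pos.mpr j.pos
  have hconv : ‖∫ z, F (X j - z) ∂ν‖ ≤ C := by
    simpa using norm_integral_le_of_norm_le_const (μ := ν) (.of_forall fun z => hFC (X j - z))
  have hsum : ‖∑ k, F (X j - X k)‖ ≤ N * C := by
    simpa using norm_sum_le_of_le univ fun k _ => hFC (X j - X k)
  have hmean : ‖(N : ℝ)⁻¹ • ∑ k, F (X j - X k)‖ ≤ C := by
    rw [norm_smul, norm_inv, Real.norm_natCast, inv_mul_le_iff₀ hN]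
    exact hsum
  calc _ ≤ ‖∫ z, F (X j - z) ∂ν‖ + ‖(N : ℝ)⁻¹ • ∑ k, F (X j - X k)‖ := norm_sub_le _ _
    _ ≤ 2 * C := by linarith

lemma stronglyMeasurable_empiricalFluctuation [MeasurableSub₂ G] [SFinite ν]
    (hF : StronglyMeasurable F) (j : Fin N) :
    StronglyMeasurable (empiricalFluctuation F ν j) := by
  have hconv : StronglyMeasurable fun x : G => ∫ z, F (x - z) ∂ν :=
    (hF.comp_measurable measurable_sub).integral_prod_right'
  exact (hconv.comp_measurable (measurable_pi_apply j)).sub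
    ((Finset.stronglyMeasurable_fun_sum _ fun k _ => hF.comp_measurable
      ((measurable_pi_apply j).sub (measurable_pi_apply k))).const_smul _)

lemma empiricalFluctuation_insertNth {n : ℕ} (j : Fin (n + 1)) (a : G) (y : Fin n → G) :
    empiricalFluctuation F ν j (j.insertNth a y)
      = ((n + 1 : ℕ) : ℝ)⁻¹ • ((∫ z, F (a - z) ∂ν) - F 0
          + ∑ m, ((∫ z, F (a - z) ∂ν) - F (a - y m))) := by
  have hn : ((n + 1 : ℕ) : ℝ) ≠ 0 := by positivity
  have hconv : (∫ z, F (a - z) ∂ν)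
      = ((n + 1 : ℕ) : ℝ)⁻¹ • ((n + 1 : ℕ) : ℝ) • ∫ z, F (a - z) ∂ν := by
    rw [smul_smul, inv_mul_cancel₀ hn, one_smul]
  rw [empiricalFluctuation, Fin.sum_univ_succAbove _ j]
  simp only [Fin.insertNth_apply_same, Fin.insertNth_apply_succAbove, sub_self]
  rw [sum_sub_distrib, sum_const, card_univ, Fintype.card_fin]
  nth_rewrite 1 [hconv]
  module

end NormedSpace

variable [MeasurableSub₂ G] {E : Type*} [NormedAddCommGroup E] [InnerProductSpace ℝ E]
  [CompleteSpace E] {F : G → E} {ν : Measure G} [IsProbabilityMeasure ν] {C : ℝ}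

lemma integral_norm_empiricalFluctuation_insertNth_sq_le (hF : StronglyMeasurable F)
    (hFC : ∀ x, ‖F x‖ ≤ C) {n : ℕ} (j : Fin (n + 1)) (a : G) :
    ∫ y, ‖empiricalFluctuation F ν j (j.insertNth a y)‖ ^ 2 ∂Measure.pi (fun _ => ν)
      ≤ (2 * C) ^ 2 / (n + 1 : ℕ) := by
  set g := ∫ z, F (a - z) ∂ν
  have hFa : StronglyMeasurable fun z => F (a - z) :=
    hF.comp_measurable (measurable_const.sub measurable_id)
  have hdev : ∀ z, ‖g - F (a - z)‖ ≤ 2 * C := fun z => by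
    have := norm_integral_le_of_norm_le_const (μ := ν) (.of_forall fun z => hFC (a - z))
    simp only [probReal_univ, mul_one] at this
    linarith [norm_sub_le g (F (a - z)), hFC (a - z)]
  have hcentred : ∫ z, (g - F (a - z)) ∂ν = 0 := by
    rw [integral_sub (integrable_const _)
      (.of_bound hFa.aestronglyMeasurable C (.of_forall fun z => hFC _)), integral_const]
    simp [g]
  have hsq_dev : ∫ z, ‖g - F (a - z)‖ ^ 2 ∂ν ≤ (2 * C) ^ 2 := by
    calc _ ≤ ∫ _z, (2 * C) ^ 2 ∂ν := integral_mono_of_nonneg (.of_forall fun _ => by positivity)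
          (integrable_const _) (.of_forall fun z => pow_le_pow_left₀ (norm_nonneg _) (hdev z) 2)
      _ = (2 * C) ^ 2 := by simp
  calc ∫ y, ‖empiricalFluctuation F ν j (j.insertNth a y)‖ ^ 2 ∂Measure.pi (fun _ => ν)
      = ((n + 1 : ℕ) : ℝ)⁻¹ ^ 2 *
          ∫ y : Fin n → G, ‖g - F 0 + ∑ m, (g - F (a - y m))‖ ^ 2 ∂Measure.pi (fun _ => ν) := by
        simp_rw [empiricalFluctuation_insertNth, norm_smul, mul_pow, norm_inv, Real.norm_natCast]
        exact integral_const_mul _ _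
    _ = ((n + 1 : ℕ) : ℝ)⁻¹ ^ 2 * (‖g - F 0‖ ^ 2 + n * ∫ z, ‖g - F (a - z)‖ ^ 2 ∂ν) := by
        rw [integral_norm_add_sum_apply_sq (h := fun z => g - F (a - z))
          (stronglyMeasurable_const.sub hFa) hdev hcentred]
    _ ≤ ((n + 1 : ℕ) : ℝ)⁻¹ ^ 2 * ((2 * C) ^ 2 + n * (2 * C) ^ 2) := by
        gcongr
        simpa using hdev a
    _ = (2 * C) ^ 2 / (n + 1 : ℕ) := by
        field_simp
        push_cast
        ring

lemma integral_norm_empiricalFluctuation_sq_le (hF : StronglyMeasurable F) (hFC : ∀ x, ‖F x‖ ≤ C)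
    {N : ℕ} (j : Fin N) :
    ∫ X, ‖empiricalFluctuation F ν j X‖ ^ 2 ∂Measure.pi (fun _ => ν) ≤ (2 * C) ^ 2 / N := by
  obtain ⟨n, rfl⟩ : ∃ n, N = n + 1 := Nat.exists_eq_add_one.mpr j.pos
  have hmp := (measurePreserving_piFinSuccAbove (fun _ : Fin (n + 1) => ν) j).symm
  set e := MeasurableEquiv.piFinSuccAbove (fun _ => G) j
  have he : ∀ q : G × (Fin n → G), e.symm q = j.insertNth q.1 q.2 := fun q => by
    simp [e, MeasurableEquiv.piFinSuccAbove_symm_apply, Fin.insertNthEquiv]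
  have hint : Integrable (fun q => ‖empiricalFluctuation F ν j (e.symm q)‖ ^ 2)
      (ν.prod (Measure.pi fun _ => ν)) :=
    .of_bound (((stronglyMeasurable_empiricalFluctuation hF j).comp_measurable
      hmp.measurable).norm.pow 2).aestronglyMeasurable ((2 * C) ^ 2) (.of_forall fun q => by
        simpa using pow_le_pow_left₀ (norm_nonneg _) (norm_empiricalFluctuation_le hFC j _) 2)
  rw [← hmp.integral_comp', integral_prod _ hint]
  simp_rw [he]
  calc _ ≤ ∫ _a, (2 * C) ^ 2 / (n + 1 : ℕ) ∂ν :=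
        integral_mono_of_nonneg (.of_forall fun a => integral_nonneg fun _ => by positivity)
          (integrable_const _)
          (.of_forall (integral_norm_empiricalFluctuation_insertNth_sq_le hF hFC j))
    _ = (2 * C) ^ 2 / (n + 1 : ℕ) := by simp

end EmpiricalFluctuation

section WithDensity

variable {α E : Type*} [MeasurableSpace α] {μ : Measure α} {ρ : α → ℝ}

lemma isProbabilityMeasure_withDensity_ofReal (hρ0 : 0 ≤ᵐ[μ] ρ) (hρ1 : ∫ x, ρ x ∂μ = 1) :
    IsProbabilityMeasure (μ.withDensity fun x => ENNReal.ofReal (ρ x)) := by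
  have hρ : Integrable ρ μ := Integrable.of_integral_ne_zero (by rw [hρ1]; exact one_ne_zero)
  constructor
  rw [withDensity_apply _ MeasurableSet.univ, Measure.restrict_univ,
    ← ofReal_integral_eq_lintegral_ofReal hρ hρ0, hρ1, ENNReal.ofReal_one]

lemma integral_withDensity_ofReal [NormedAddCommGroup E] [NormedSpace ℝ E] (hρm : Measurable ρ)
    (hρ0 : 0 ≤ᵐ[μ] ρ) (f : α → E) :
    ∫ x, f x ∂μ.withDensity (fun x => ENNReal.ofReal (ρ x)) = ∫ x, ρ x • f x ∂μ := by
  rw [integral_withDensity_eq_integral_toReal_smul hρm.ennreal_ofReal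
    (.of_forall fun _ => ENNReal.ofReal_lt_top)]
  refine integral_congr_ae (hρ0.mono fun x hx => ?_)
  simp only [ENNReal.toReal_ofReal hx]

end WithDensity

theorem empirical_mean_field_Lp_bound_general (d N : ℕ)
    (F : EuclideanSpace ℝ (Fin d) → EuclideanSpace ℝ (Fin d)) (hFm : Measurable F)
    (C : ℝ) (hFb : ∀ x, ‖F x‖ ≤ C)
    (ρ : EuclideanSpace ℝ (Fin d) → ℝ) (hρm : Measurable ρ)
    (hρ0 : ∀ x, 0 ≤ ρ x) (hρ1 : ∫ x, ρ x = 1)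
    (p : ℝ) (hp : 0 < p) (j : Fin N) :
    ∫ X : Fin N → EuclideanSpace ℝ (Fin d),
        ‖(∫ z, ρ z • F (X j - z)) - (N : ℝ)⁻¹ • ∑ k, F (X j - X k)‖ ^ p
        ∂(Measure.pi fun _ : Fin N =>
            volume.withDensity fun x => ENNReal.ofReal (ρ x))
      ≤ (2 * (⌊p / 2⌋ : ℝ) + 2) * (2 * C) ^ p / (N : ℝ) ^ min (p / 2) 1 := by
  set ν := volume.withDensity fun x => ENNReal.ofReal (ρ x)
  have : IsProbabilityMeasure ν := isProbabilityMeasure_withDensity_ofReal (.of_forall hρ0) hρ1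
  have hZ : ∀ X : Fin N → EuclideanSpace ℝ (Fin d),
      (∫ z, ρ z • F (X j - z)) - (N : ℝ)⁻¹ • ∑ k, F (X j - X k) = empiricalFluctuation F ν j X :=
    fun X => by rw [empiricalFluctuation, integral_withDensity_ofReal hρm (.of_forall hρ0)]
  simp_rw [hZ]
  have hN : (0 : ℝ) < N := Nat.cast_pos.mpr j.pos
  have hfloor : (0 : ℝ) ≤ ⌊p / 2⌋ := by exact_mod_cast Int.floor_nonneg.mpr (by positivity)
  have hCp : 0 ≤ (2 * C) ^ p := Real.rpow_nonneg (by linarith [norm_nonneg (F 0), hFb 0]) p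
  have hZm := stronglyMeasurable_empiricalFluctuation (ν := ν) hFm.stronglyMeasurable j
  calc _ ≤ (2 * C) ^ p * (N : ℝ)⁻¹ ^ min (p / 2) 1 :=
        integral_rpow_le_of_integral_sq_le hZm.norm.measurable.aemeasurable
          (fun _ => norm_nonneg _) (norm_empiricalFluctuation_le hFb j) hp.le (by positivity)
          (by simpa [div_eq_mul_inv] using
            integral_norm_empiricalFluctuation_sq_le hFm.stronglyMeasurable hFb j)
    _ = 1 * (2 * C) ^ p / (N : ℝ) ^ min (p / 2) 1 := by
        rw [Real.inv_rpow hN.le, one_mul, div_eq_mul_inv ((2 * C) ^ p)]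
    _ ≤ _ := by gcongr; linarith

/-- Combinatorial law-of-large-numbers lemma: if `F : ℝ^d → ℝ^d` is bounded
measurable (`‖F‖_∞ ≤ C`), `ρ` is a probability density on `ℝ^d` and `p > 0`, then
for each `j`,
`∫ |F⋆ρ(x_j) − (1/N)∑_k F(x_j − x_k)|^p ∏ρ(x_m)dx_m
   ≤ (2⌊p/2⌋ + 2)·(2C)^p / N^{min(p/2,1)}`. -/
theorem empirical_mean_field_Lp_bound (d N : ℕ) (hN : 1 ≤ N)
    (F : EuclideanSpace ℝ (Fin d) → EuclideanSpace ℝ (Fin d)) (hFm : Measurable F)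
    (C : ℝ) (hFb : ∀ x, ‖F x‖ ≤ C)
    (ρ : EuclideanSpace ℝ (Fin d) → ℝ) (hρm : Measurable ρ)
    (hρ0 : ∀ x, 0 ≤ ρ x) (hρ1 : ∫ x, ρ x = 1)
    (p : ℝ) (hp : 0 < p) (j : Fin N) :
    ∫ X : Fin N → EuclideanSpace ℝ (Fin d),
        ‖(∫ z, ρ z • F (X j - z)) - (N : ℝ)⁻¹ • ∑ k, F (X j - X k)‖ ^ p
        ∂(Measure.pi fun _ : Fin N =>
            volume.withDensity fun x => ENNReal.ofReal (ρ x))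
      ≤ (2 * (⌊p / 2⌋ : ℝ) + 2) * (2 * C) ^ p / (N : ℝ) ^ min (p / 2) 1 :=
  empirical_mean_field_Lp_bound_general d N F hFm C hFb ρ hρm hρ0 hρ1 p hp j
end

section
/- Let π be a symmetric (under simultaneous particle permutations) coupling of f^{⊗n'} and F on phase space with N particles each, p ≥ 1, and define D := (1/N)∑_{j=1}^N ∫(|x_j − y_j|^p + |ξ_j − η_j|^p) dπ. Then for each n with 1 ≤ n ≤ N, the marginal π^n of π on the first n particles of each factor is a coupling of f^{⊗n} and the n-particle marginal F^n, and n·D ≥ dist_{MK,p}(f^{⊗n}, F^n)^p. -/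
/-!
Cutting a coupling of `f^{⊗N}` and `F` down to the first `n` particles on both sides gives a
coupling of `f^{⊗n}` and `F^n`, because the coordinates of a product measure are independent.
Its cost is the sum of the first `n` one-particle costs, and exchangeability of `π` forces all
one-particle costs to have the same expectation, namely their average `D`. Hence the cut-down
coupling costs at most `n·D`, which bounds the infimum over all couplings.
-/

open MeasureTheory ProbabilityTheory

theorem MeasureTheory.Measure.pi_map_comp_of_injective {ι ι' : Type*} [Fintype ι] [Fintype ι']
    {α : ι → Type*} [∀ i, MeasurableSpace (α i)] (μ : ∀ i, Measure (α i))
    [∀ i, IsProbabilityMeasure (μ i)] {e : ι' → ι} (he : e.Injective) :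
    (Measure.pi μ).map (fun a i => a (e i)) = Measure.pi fun i => μ (e i) := by
  have hind : iIndepFun (fun i (a : ∀ j, α j) => a (e i)) (Measure.pi μ) :=
    (iIndepFun_pi (X := fun _ => id) fun _ => aemeasurable_id).precomp he
  rw [(iIndepFun_iff_map_fun_eq_pi_map fun i => (measurable_pi_apply (e i)).aemeasurable).1 hind]
  simp_rw [(measurePreserving_eval μ _).map_eq]

section Coupling

variable {α β γ δ : Type*} [MeasurableSpace α] [MeasurableSpace β] [MeasurableSpace γ]
  [MeasurableSpace δ] {f : α → γ} {g : β → δ}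

theorem MeasureTheory.Measure.map_fst_map_prodMap (π : Measure (α × β)) (hf : Measurable f)
    (hg : Measurable g) : (π.map (Prod.map f g)).map Prod.fst = (π.map Prod.fst).map f := by
  rw [Measure.map_map measurable_fst (hf.prodMap hg), Measure.map_map hf measurable_fst]
  rfl

theorem MeasureTheory.Measure.map_snd_map_prodMap (π : Measure (α × β)) (hf : Measurable f)
    (hg : Measurable g) : (π.map (Prod.map f g)).map Prod.snd = (π.map Prod.snd).map g := by
  rw [Measure.map_map measurable_snd (hf.prodMap hg), Measure.map_map hg measurable_snd]
  rfl

end Coupling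

-- Not an equality: a non-integrable sum has Bochner integral `0`.
theorem MeasureTheory.integral_finsetSum_le_of_nonneg {α ι : Type*} [MeasurableSpace α]
    {μ : Measure α} {s : Finset ι} {f : ι → α → ℝ} (hf : ∀ i ∈ s, 0 ≤ f i)
    (hfm : ∀ i ∈ s, AEStronglyMeasurable (f i) μ) :
    ∫ a, ∑ i ∈ s, f i a ∂μ ≤ ∑ i ∈ s, ∫ a, f i a ∂μ := by
  by_cases hint : Integrable (fun a => ∑ i ∈ s, f i a) μ
  · refine (integral_finsetSum s fun i hi => hint.mono' (hfm i hi) (.of_forall fun a => ?_)).le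
    rw [Real.norm_of_nonneg (hf i hi a)]
    exact Finset.single_le_sum (fun j hj => hf j hj a) hi
  · rw [integral_undef hint]
    exact Finset.sum_nonneg fun i hi => integral_nonneg (hf i hi)

section SymmetricCoupling

variable {ι β : Type*} [MeasurableSpace β]

/-- Exchangeability of the sequence of pairs `(a j, b j)` under `π`. -/
def JointlyExchangeable (π : Measure ((ι → β) × (ι → β))) : Prop :=
  ∀ σ : Equiv.Perm ι, π.map (fun ab => (ab.1 ∘ σ, ab.2 ∘ σ)) = π

theorem Measurable.comp_eval_pair {γ : Type*} [MeasurableSpace γ] {c : β → β → γ}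
    (hc : Measurable (Function.uncurry c)) (i : ι) :
    Measurable fun ab : (ι → β) × (ι → β) => c (ab.1 i) (ab.2 i) :=
  hc.comp (f := fun ab : (ι → β) × (ι → β) => (ab.1 i, ab.2 i)) (by fun_prop)

variable {π : Measure ((ι → β) × (ι → β))} {c : β → β → ℝ}

theorem JointlyExchangeable.integral_cost_eq [DecidableEq ι] (hπ : JointlyExchangeable π)
    (hc : Measurable (Function.uncurry c)) (i j : ι) :
    ∫ ab, c (ab.1 i) (ab.2 i) ∂π = ∫ ab, c (ab.1 j) (ab.2 j) ∂π := by
  have hT : Measurable fun ab : (ι → β) × (ι → β) =>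
      (ab.1 ∘ Equiv.swap i j, ab.2 ∘ Equiv.swap i j) := by fun_prop
  conv_rhs => rw [← hπ (Equiv.swap i j),
    integral_map hT.aemeasurable (hc.comp_eval_pair j).aestronglyMeasurable]
  simp

theorem JointlyExchangeable.integral_cost_eq_average [Fintype ι] (hπ : JointlyExchangeable π)
    (hc : Measurable (Function.uncurry c)) (j : ι) :
    ∫ ab, c (ab.1 j) (ab.2 j) ∂π
      = (Fintype.card ι : ℝ)⁻¹ * ∑ k, ∫ ab, c (ab.1 k) (ab.2 k) ∂π := by
  classical
  have : Nonempty ι := ⟨j⟩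
  rw [Finset.sum_congr rfl fun k _ => hπ.integral_cost_eq hc k j, Finset.sum_const,
    Finset.card_univ, nsmul_eq_mul,
    inv_mul_cancel_left₀ (Nat.cast_ne_zero.2 Fintype.card_ne_zero)]

theorem JointlyExchangeable.integral_sum_cost_map_comp_le [Fintype ι] {ι' : Type*}
    [Fintype ι'] (hπ : JointlyExchangeable π) (hc : Measurable (Function.uncurry c))
    (hc0 : ∀ x y, 0 ≤ c x y) (e : ι' → ι) :
    ∫ ab, ∑ i, c (ab.1 i) (ab.2 i)
        ∂π.map (Prod.map (fun a i => a (e i)) (fun a i => a (e i)))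
      ≤ Fintype.card ι' * ((Fintype.card ι : ℝ)⁻¹ * ∑ j, ∫ ab, c (ab.1 j) (ab.2 j) ∂π) := by
  calc ∫ ab, ∑ i, c (ab.1 i) (ab.2 i)
        ∂π.map (Prod.map (fun a i => a (e i)) (fun a i => a (e i)))
      = ∫ ab, ∑ i, c (ab.1 (e i)) (ab.2 (e i)) ∂π :=
        integral_map (by fun_prop)
          (Finset.measurable_sum _ fun i _ => hc.comp_eval_pair i).aestronglyMeasurable
    _ ≤ ∑ i, ∫ ab, c (ab.1 (e i)) (ab.2 (e i)) ∂π :=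
        integral_finsetSum_le_of_nonneg (fun _ _ _ => hc0 _ _)
          fun i _ => (hc.comp_eval_pair (e i)).aestronglyMeasurable
    _ = _ := by
        rw [Finset.sum_congr rfl fun i _ => hπ.integral_cost_eq_average hc (e i),
          Finset.sum_const, Finset.card_univ, nsmul_eq_mul]

end SymmetricCoupling

theorem symmetric_coupling_marginal_bound_general (d N n : ℕ) (hnN : n ≤ N)
    (p : ℝ)
    (f : Measure (EuclideanSpace ℝ (Fin d) × EuclideanSpace ℝ (Fin d)))
    [IsProbabilityMeasure f]
    (F : Measure (Fin N → EuclideanSpace ℝ (Fin d) × EuclideanSpace ℝ (Fin d)))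
    (π : Measure ((Fin N → EuclideanSpace ℝ (Fin d) × EuclideanSpace ℝ (Fin d)) ×
                  (Fin N → EuclideanSpace ℝ (Fin d) × EuclideanSpace ℝ (Fin d))))
    [IsProbabilityMeasure π]
    (hπ1 : Measure.map Prod.fst π = Measure.pi (fun _ : Fin N => f))
    (hπ2 : Measure.map Prod.snd π = F)
    (hsym : ∀ σ : Equiv.Perm (Fin N),
      Measure.map (fun ab => (ab.1 ∘ σ, ab.2 ∘ σ)) π = π) :
    Measure.map Prod.fst
        (Measure.map (Prod.map
          (fun a : Fin N → EuclideanSpace ℝ (Fin d) × EuclideanSpace ℝ (Fin d) =>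
            fun i : Fin n => a (Fin.castLE hnN i))
          (fun a : Fin N → EuclideanSpace ℝ (Fin d) × EuclideanSpace ℝ (Fin d) =>
            fun i : Fin n => a (Fin.castLE hnN i))) π)
      = Measure.pi (fun _ : Fin n => f) ∧
    Measure.map Prod.snd
        (Measure.map (Prod.map
          (fun a : Fin N → EuclideanSpace ℝ (Fin d) × EuclideanSpace ℝ (Fin d) =>
            fun i : Fin n => a (Fin.castLE hnN i))
          (fun a : Fin N → EuclideanSpace ℝ (Fin d) × EuclideanSpace ℝ (Fin d) =>
            fun i : Fin n => a (Fin.castLE hnN i))) π)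
      = Measure.map
          (fun a : Fin N → EuclideanSpace ℝ (Fin d) × EuclideanSpace ℝ (Fin d) =>
            fun i : Fin n => a (Fin.castLE hnN i)) F ∧
    sInf { c : ℝ |
        ∃ γ : Measure ((Fin n → EuclideanSpace ℝ (Fin d) × EuclideanSpace ℝ (Fin d)) ×
                       (Fin n → EuclideanSpace ℝ (Fin d) × EuclideanSpace ℝ (Fin d))),
          IsProbabilityMeasure γ ∧
          Measure.map Prod.fst γ = Measure.pi (fun _ : Fin n => f) ∧
          Measure.map Prod.snd γ
            = Measure.map
                (fun a : Fin N → EuclideanSpace ℝ (Fin d) × EuclideanSpace ℝ (Fin d) =>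
                  fun i : Fin n => a (Fin.castLE hnN i)) F ∧
          c = ∫ ab, ∑ j : Fin n,
                (‖(ab.1 j).1 - (ab.2 j).1‖ ^ p + ‖(ab.1 j).2 - (ab.2 j).2‖ ^ p) ∂γ }
      ≤ (n : ℝ) * ((N : ℝ)⁻¹ * ∑ j : Fin N,
          ∫ ab, (‖(ab.1 j).1 - (ab.2 j).1‖ ^ p + ‖(ab.1 j).2 - (ab.2 j).2‖ ^ p) ∂π) := by
  have hg : Measurable fun a : Fin N → EuclideanSpace ℝ (Fin d) × EuclideanSpace ℝ (Fin d) =>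
      fun i : Fin n => a (Fin.castLE hnN i) := by fun_prop
  have h1 := Measure.map_fst_map_prodMap π hg hg
  rw [hπ1, Measure.pi_map_comp_of_injective _ (Fin.castLE_injective hnN)] at h1
  have h2 := Measure.map_snd_map_prodMap π hg hg
  rw [hπ2] at h2
  refine ⟨h1, h2, ?_⟩
  have hc : Measurable (Function.uncurry fun x y : EuclideanSpace ℝ (Fin d) ×
      EuclideanSpace ℝ (Fin d) => ‖x.1 - y.1‖ ^ p + ‖x.2 - y.2‖ ^ p) := by fun_prop
  have hc0 (x y : EuclideanSpace ℝ (Fin d) × EuclideanSpace ℝ (Fin d)) :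
      0 ≤ ‖x.1 - y.1‖ ^ p + ‖x.2 - y.2‖ ^ p := by positivity
  refine csInf_le_of_le ⟨0, ?_⟩
    ⟨_, Measure.isProbabilityMeasure_map (hg.prodMap hg).aemeasurable, h1, h2, rfl⟩ ?_
  · rintro _ ⟨γ, -, -, -, rfl⟩
    exact integral_nonneg fun ab => Finset.sum_nonneg fun j _ => hc0 _ _
  · simpa using JointlyExchangeable.integral_sum_cost_map_comp_le hsym hc hc0 (Fin.castLE hnN)

/-- From a symmetric coupling of `f^{⊗N}` and `F` to a bound on the
Monge–Kantorovich distance between `f^{⊗n}` and the `n`-particle marginal `F^n`: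
the marginal `π^n` of `π` on the first `n` particles of each factor is a coupling
of `f^{⊗n}` and `F^n`, and `n·D ≥ dist_{MK,p}(f^{⊗n}, F^n)^p`, where
`D := (1/N)∑_j ∫(|x_j−y_j|^p + |ξ_j−η_j|^p) dπ`. -/
theorem symmetric_coupling_marginal_bound (d N n : ℕ) (hn : 1 ≤ n) (hnN : n ≤ N)
    (p : ℝ) (hp : 1 ≤ p)
    (f : Measure (EuclideanSpace ℝ (Fin d) × EuclideanSpace ℝ (Fin d)))
    [IsProbabilityMeasure f]
    (hfmom : Integrable (fun w : EuclideanSpace ℝ (Fin d) × EuclideanSpace ℝ (Fin d) =>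
        ‖w.1‖ ^ p + ‖w.2‖ ^ p) f)
    (F : Measure (Fin N → EuclideanSpace ℝ (Fin d) × EuclideanSpace ℝ (Fin d)))
    [IsProbabilityMeasure F]
    (hFmom : Integrable (fun a : Fin N → EuclideanSpace ℝ (Fin d) × EuclideanSpace ℝ (Fin d) =>
        ∑ j : Fin N, (‖(a j).1‖ ^ p + ‖(a j).2‖ ^ p)) F)
    (π : Measure ((Fin N → EuclideanSpace ℝ (Fin d) × EuclideanSpace ℝ (Fin d)) ×
                  (Fin N → EuclideanSpace ℝ (Fin d) × EuclideanSpace ℝ (Fin d))))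
    [IsProbabilityMeasure π]
    (hπ1 : Measure.map Prod.fst π = Measure.pi (fun _ : Fin N => f))
    (hπ2 : Measure.map Prod.snd π = F)
    (hsym : ∀ σ : Equiv.Perm (Fin N),
      Measure.map (fun ab => (ab.1 ∘ σ, ab.2 ∘ σ)) π = π) :
    Measure.map Prod.fst
        (Measure.map (Prod.map
          (fun a : Fin N → EuclideanSpace ℝ (Fin d) × EuclideanSpace ℝ (Fin d) =>
            fun i : Fin n => a (Fin.castLE hnN i))
          (fun a : Fin N → EuclideanSpace ℝ (Fin d) × EuclideanSpace ℝ (Fin d) =>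
            fun i : Fin n => a (Fin.castLE hnN i))) π)
      = Measure.pi (fun _ : Fin n => f) ∧
    Measure.map Prod.snd
        (Measure.map (Prod.map
          (fun a : Fin N → EuclideanSpace ℝ (Fin d) × EuclideanSpace ℝ (Fin d) =>
            fun i : Fin n => a (Fin.castLE hnN i))
          (fun a : Fin N → EuclideanSpace ℝ (Fin d) × EuclideanSpace ℝ (Fin d) =>
            fun i : Fin n => a (Fin.castLE hnN i))) π)
      = Measure.map
          (fun a : Fin N → EuclideanSpace ℝ (Fin d) × EuclideanSpace ℝ (Fin d) =>
            fun i : Fin n => a (Fin.castLE hnN i)) F ∧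
    sInf { c : ℝ |
        ∃ γ : Measure ((Fin n → EuclideanSpace ℝ (Fin d) × EuclideanSpace ℝ (Fin d)) ×
                       (Fin n → EuclideanSpace ℝ (Fin d) × EuclideanSpace ℝ (Fin d))),
          IsProbabilityMeasure γ ∧
          Measure.map Prod.fst γ = Measure.pi (fun _ : Fin n => f) ∧
          Measure.map Prod.snd γ
            = Measure.map
                (fun a : Fin N → EuclideanSpace ℝ (Fin d) × EuclideanSpace ℝ (Fin d) =>
                  fun i : Fin n => a (Fin.castLE hnN i)) F ∧
          c = ∫ ab, ∑ j : Fin n,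
                (‖(ab.1 j).1 - (ab.2 j).1‖ ^ p + ‖(ab.1 j).2 - (ab.2 j).2‖ ^ p) ∂γ }
      ≤ (n : ℝ) * ((N : ℝ)⁻¹ * ∑ j : Fin N,
          ∫ ab, (‖(ab.1 j).1 - (ab.2 j).1‖ ^ p + ‖(ab.1 j).2 - (ab.2 j).2‖ ^ p) ∂π) :=
  symmetric_coupling_marginal_bound_general d N n hnN p f F π hπ1 hπ2 hsym
end
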